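/- arXiv:2306.08438 — 6 statements merged into one kernel-verified Lean document; each statement's English description precedes it below -/
import Mathlib

section
/- Let a, b, σ be positive real numbers and let ε ∈ (0,1]. For every B with 0 < B < 1, B·log₂(1 + ε·a/((1−ε)·a + B·σ)) + (1−B)·log₂(1 + ε·b/((1−ε)·b + (1−B)·σ)) ≤ log₂(1 + ε·(a+b)/((1−ε)·(a+b) + σ)), and equality holds if and only if B = a/(a+b). (Theorem 3: with a = ρ_t|ĥ_t|², b = ρ_r|ĥ_r|², σ = σ_w², and ε the combined transceiver hardware quality factor, the achievable sum-rate of the OMA scheme never exceeds that of the NOMA scheme, with equality only at the time/frequency fraction B = a/(a+b).) -/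
/-!
Write `φ x = log₂ (1 + ε x / ((1 - ε) x + σ))` for the rate at received power `x`. A user holding
the fraction `B` of the resource gets `B φ (a / B)`, so the OMA sum-rate is
`B φ (a / B) + (1 - B) φ (b / (1 - B))`, a convex combination of values of `φ` at two points whose
barycenter is `a + b`. Since `φ' x = ε σ / (((1 - ε) x + σ) (x + σ) ln 2)` is strictly decreasing,
`φ` is strictly concave and Jensen gives `≤ φ (a + b)`, the NOMA sum-rate, with equality iff the
two points coincide, i.e. `a / B = b / (1 - B)`.
-/

open Real Set

section Concave

variable {s : Set ℝ} {f : ℝ → ℝ}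

theorem StrictConcaveOn.mul_add_mul_eq_iff {x y θ : ℝ} (hf : StrictConcaveOn ℝ s f) (hx : x ∈ s)
    (hy : y ∈ s) (hθ0 : 0 < θ) (hθ1 : θ < 1) :
    θ * f x + (1 - θ) * f y = f (θ * x + (1 - θ) * y) ↔ x = y := by
  refine ⟨fun heq => ?_, fun hxy => by rw [hxy]; ring_nf⟩
  by_contra hxy
  exact (hf.2 hx hy hxy hθ0 (sub_pos.2 hθ1) (by ring)).ne heq

variable {a b θ : ℝ}

theorem mul_div_add_mul_div_one_sub (hθ0 : θ ≠ 0) (hθ1 : 1 - θ ≠ 0) :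
    θ * (a / θ) + (1 - θ) * (b / (1 - θ)) = a + b := by
  rw [mul_div_cancel₀ _ hθ0, mul_div_cancel₀ _ hθ1]

theorem div_eq_div_one_sub_iff (hθ0 : θ ≠ 0) (hθ1 : 1 - θ ≠ 0) (hab : a + b ≠ 0) :
    a / θ = b / (1 - θ) ↔ θ = a / (a + b) := by
  rw [div_eq_div_iff hθ0 hθ1, eq_div_iff hab]
  constructor <;> intro h <;> linarith

theorem ConcaveOn.perspective_add_le (hf : ConcaveOn ℝ s f) (ha : a / θ ∈ s)
    (hb : b / (1 - θ) ∈ s) (hθ0 : 0 < θ) (hθ1 : θ < 1) :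
    θ * f (a / θ) + (1 - θ) * f (b / (1 - θ)) ≤ f (a + b) := by
  have h := hf.2 ha hb hθ0.le (sub_pos.2 hθ1).le (by ring)
  simp only [smul_eq_mul] at h
  rwa [mul_div_add_mul_div_one_sub hθ0.ne' (sub_pos.2 hθ1).ne'] at h

theorem StrictConcaveOn.perspective_add_eq_iff (hf : StrictConcaveOn ℝ s f) (ha : a / θ ∈ s)
    (hb : b / (1 - θ) ∈ s) (hθ0 : 0 < θ) (hθ1 : θ < 1) (hab : a + b ≠ 0) :
    θ * f (a / θ) + (1 - θ) * f (b / (1 - θ)) = f (a + b) ↔ θ = a / (a + b) := by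
  rw [← div_eq_div_one_sub_iff hθ0.ne' (sub_pos.2 hθ1).ne' hab,
    ← hf.mul_add_mul_eq_iff ha hb hθ0 hθ1, mul_div_add_mul_div_one_sub hθ0.ne' (sub_pos.2 hθ1).ne']

end Concave

noncomputable def impairedRate (ε σ x : ℝ) : ℝ :=
  logb 2 (1 + ε * x / ((1 - ε) * x + σ))

section ImpairedRate

variable {ε σ : ℝ}

theorem impairedRate_div {x t : ℝ} (ht : t ≠ 0) :
    impairedRate ε σ (x / t) = logb 2 (1 + ε * x / ((1 - ε) * x + t * σ)) := by
  rw [impairedRate, mul_div_assoc', mul_div_assoc', div_add' _ _ _ ht,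
    div_div_div_cancel_right₀ ht, mul_comm σ t]

theorem hasDerivAt_impairedRate (hσ : 0 < σ) (hε1 : ε ≤ 1) {x : ℝ} (hx : 0 ≤ x) :
    HasDerivAt (impairedRate ε σ) (ε * σ / (((1 - ε) * x + σ) * (x + σ) * log 2)) x := by
  have hD : 0 < (1 - ε) * x + σ := by nlinarith
  have hsinr : 1 + ε * x / ((1 - ε) * x + σ) = (x + σ) / ((1 - ε) * x + σ) := by
    rw [eq_div_iff hD.ne', add_mul, div_mul_cancel₀ _ hD.ne']
    ring
  have hquot : HasDerivAt (fun y => 1 + ε * y / ((1 - ε) * y + σ))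
      ((ε * ((1 - ε) * x + σ) - ε * x * (1 - ε)) / ((1 - ε) * x + σ) ^ 2) x := by
    simpa using (((hasDerivAt_id x).const_mul ε).div
      (((hasDerivAt_id x).const_mul (1 - ε)).add_const σ) hD.ne').const_add 1
  have hpos : 0 < 1 + ε * x / ((1 - ε) * x + σ) := by
    rw [hsinr]
    positivity
  refine ((hquot.log hpos.ne').div_const (log 2)).congr_deriv ?_
  rw [hsinr]
  field_simp
  ring

theorem strictConcaveOn_impairedRate (hσ : 0 < σ) (hε : 0 < ε) (hε1 : ε ≤ 1) :
    StrictConcaveOn ℝ (Ioi 0) (impairedRate ε σ) := by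
  refine StrictAntiOn.strictConcaveOn_of_deriv (convex_Ioi 0) (fun x hx =>
    (hasDerivAt_impairedRate hσ hε1 (le_of_lt hx)).continuousAt.continuousWithinAt) ?_
  rw [interior_Ioi]
  intro x (hx : 0 < x) y (hy : 0 < y) hxy
  rw [(hasDerivAt_impairedRate hσ hε1 hx.le).deriv, (hasDerivAt_impairedRate hσ hε1 hy.le).deriv]
  have hden : ((1 - ε) * x + σ) * (x + σ) < ((1 - ε) * y + σ) * (y + σ) := by
    have : (1 - ε) * x ≤ (1 - ε) * y := by gcongr
    nlinarith
  have := log_pos one_lt_two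
  gcongr

end ImpairedRate

/-- Theorem 3: the OMA sum-rate never exceeds the NOMA sum-rate, with equality
iff the time/frequency fraction is `B = a/(a+b)`. -/
theorem oma_sum_rate_le_noma_sum_rate
    (a b σ ε : ℝ) (ha : 0 < a) (hb : 0 < b) (hσ : 0 < σ)
    (hε : 0 < ε) (hε1 : ε ≤ 1) :
    ∀ B : ℝ, 0 < B → B < 1 →
      (B * Real.logb 2 (1 + ε * a / ((1 - ε) * a + B * σ))
          + (1 - B) * Real.logb 2 (1 + ε * b / ((1 - ε) * b + (1 - B) * σ))
        ≤ Real.logb 2 (1 + ε * (a + b) / ((1 - ε) * (a + b) + σ)))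
      ∧
      ((B * Real.logb 2 (1 + ε * a / ((1 - ε) * a + B * σ))
          + (1 - B) * Real.logb 2 (1 + ε * b / ((1 - ε) * b + (1 - B) * σ))
        = Real.logb 2 (1 + ε * (a + b) / ((1 - ε) * (a + b) + σ)))
        ↔ B = a / (a + b)) := by
  intro B hB0 hB1
  have hφ := strictConcaveOn_impairedRate hσ hε hε1
  have hxT : a / B ∈ Ioi 0 := div_pos ha hB0
  have hxR : b / (1 - B) ∈ Ioi 0 := div_pos hb (sub_pos.2 hB1)
  rw [← impairedRate_div hB0.ne', ← impairedRate_div (sub_pos.2 hB1).ne']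
  exact ⟨hφ.concaveOn.perspective_add_le hxT hxR hB0 hB1,
    hφ.perspective_add_eq_iff hxT hxR hB0 hB1 (add_pos ha hb).ne'⟩
end

section
/- Let a, b, σ be positive real numbers and ε ∈ (0,1]. Substituting the time/frequency fraction B = a/(a+b) into the OMA sum-rate yields exactly the NOMA sum-rate: (a/(a+b))·log₂(1 + ε·a/((1−ε)·a + (a/(a+b))·σ)) + (b/(a+b))·log₂(1 + ε·b/((1−ε)·b + (b/(a+b))·σ)) = log₂(1 + ε·(a+b)/((1−ε)·(a+b) + σ)). -/
/-- Substituting the time/frequency fraction `B = a/(a+b)` into the OMA sum-rate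
yields exactly the perfect-SIC NOMA sum-rate. -/
theorem oma_sum_rate_at_optimal_fraction_eq_noma
    (a b σ ε : ℝ) (ha : 0 < a) (hb : 0 < b) (hσ : 0 < σ)
    (hε : 0 < ε) (hε1 : ε ≤ 1) :
    (a / (a + b)) * Real.logb 2 (1 + ε * a / ((1 - ε) * a + (a / (a + b)) * σ))
      + (b / (a + b)) * Real.logb 2 (1 + ε * b / ((1 - ε) * b + (b / (a + b)) * σ))
    = Real.logb 2 (1 + ε * (a + b) / ((1 - ε) * (a + b) + σ)) := by
  have hab : 0 < a + b := by linarith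
  have hD : 0 < (1 - ε) * (a + b) + σ := by nlinarith
  have hDa : (1 - ε) * a + (a / (a + b)) * σ ≠ 0 := by
    have : (1 - ε) * a + (a / (a + b)) * σ > 0 := by
      have := div_pos ha hab
      nlinarith
    linarith
  have hDb : (1 - ε) * b + (b / (a + b)) * σ ≠ 0 := by
    have : (1 - ε) * b + (b / (a + b)) * σ > 0 := by
      have := div_pos hb hab
      nlinarith
    linarith
  have hDa' : 0 < (1 - ε) * a + (a / (a + b)) * σ := by
    have := div_pos ha hab; nlinarith
  have hDb' : 0 < (1 - ε) * b + (b / (a + b)) * σ := by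
    have := div_pos hb hab; nlinarith
  have h1 : ε * a / ((1 - ε) * a + (a / (a + b)) * σ)
      = ε * (a + b) / ((1 - ε) * (a + b) + σ) := by
    rw [div_eq_div_iff hDa'.ne' hD.ne']
    field_simp
  have h2 : ε * b / ((1 - ε) * b + (b / (a + b)) * σ)
      = ε * (a + b) / ((1 - ε) * (a + b) + σ) := by
    rw [div_eq_div_iff hDb'.ne' hD.ne']
    field_simp
  rw [h1, h2, ← add_mul]
  have : a / (a + b) + b / (a + b) = 1 := by field_simp
  rw [this, one_mul]
end

section
/- Let a, b, σ be positive real numbers and ε ∈ (0,1]. The function f : (0,1) → ℝ defined by f(B) = B·log₂(1 + ε·a/((1−ε)·a + B·σ)) + (1−B)·log₂(1 + ε·b/((1−ε)·b + (1−B)·σ)) has derivative equal to 0 at the point B = a/(a+b); that is, HasDerivAt f 0 (a/(a+b)). -/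
/-!
Write `R c t` for the rate of a user with effective channel gain `c` holding the fraction `t`
of the resource, so that the sum rate is `R a B + R b (1 - B)`. Since `R (s * c) (s * t) =
s * R c t`, the partial derivative `∂ₜ R` only depends on `c / t`. At `B = a / (a + b)` both
users see the same ratio `a / B = b / (1 - B) = a + b`, so the two contributions to the
derivative of the sum rate cancel.
-/

open Real

namespace OMA

noncomputable def userRate (ε σ c t : ℝ) : ℝ :=
  t * logb 2 (1 + ε * c / ((1 - ε) * c + t * σ))

variable {ε σ : ℝ}

theorem userRate_mul_mul (c t : ℝ) {s : ℝ} (hs : s ≠ 0) :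
    userRate ε σ (s * c) (s * t) = s * userRate ε σ c t := by
  have hfrac : ε * (s * c) / ((1 - ε) * (s * c) + s * t * σ)
      = ε * c / ((1 - ε) * c + t * σ) := by
    rw [show ε * (s * c) = s * (ε * c) by ring,
      show (1 - ε) * (s * c) + s * t * σ = s * ((1 - ε) * c + t * σ) by ring,
      mul_div_mul_left _ _ hs]
  rw [userRate, userRate, hfrac, mul_assoc]

theorem differentiableAt_userRate {c t : ℝ} (hD : (1 - ε) * c + t * σ ≠ 0)
    (hx : 1 + ε * c / ((1 - ε) * c + t * σ) ≠ 0) :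
    DifferentiableAt ℝ (userRate ε σ c) t := by
  unfold userRate logb
  fun_prop (disch := assumption)

theorem hasDerivAt_userRate_mul_mul {c t d : ℝ} (h : HasDerivAt (userRate ε σ c) d t)
    {s : ℝ} (hs : s ≠ 0) : HasDerivAt (userRate ε σ (s * c)) d (s * t) := by
  have hscale : userRate ε σ (s * c) = fun u => s * userRate ε σ c (u / s) := by
    funext u
    rw [← userRate_mul_mul c _ hs, mul_div_cancel₀ _ hs]
  have hinner : HasDerivAt (fun u => u / s) s⁻¹ (s * t) := by
    simpa only [one_div] using (hasDerivAt_id' (s * t)).div_const s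
  rw [hscale]
  exact ((HasDerivAt.comp_of_eq (s * t) h hinner (mul_div_cancel_left₀ t hs).symm).const_mul s
    ).congr_deriv (by rw [mul_comm d, mul_inv_cancel_left₀ hs])

end OMA

open OMA in
/-- Appendix C critical-point computation: the OMA sum-rate, as a function of the
time/frequency fraction `B`, has derivative `0` at `B = a/(a+b)`. -/
theorem oma_sum_rate_hasDerivAt_zero
    (a b σ ε : ℝ) (ha : 0 < a) (hb : 0 < b) (hσ : 0 < σ)
    (hε : 0 < ε) (hε1 : ε ≤ 1) :
    HasDerivAt
      (fun B : ℝ =>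
        B * Real.logb 2 (1 + ε * a / ((1 - ε) * a + B * σ))
          + (1 - B) * Real.logb 2 (1 + ε * b / ((1 - ε) * b + (1 - B) * σ)))
      0 (a / (a + b)) := by
  set r := a + b
  have hr : 0 < r := add_pos ha hb
  have hD : 0 < (1 - ε) * r + 1 * σ := by nlinarith
  have hx : 0 < 1 + ε * r / ((1 - ε) * r + 1 * σ) := by positivity
  obtain ⟨d, hd⟩ : ∃ d, HasDerivAt (userRate ε σ r) d 1 :=
    ⟨_, (differentiableAt_userRate hD.ne' hx.ne').hasDerivAt⟩
  have hda : HasDerivAt (userRate ε σ a) d (a / r) := by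
    simpa only [div_mul_cancel₀ _ hr.ne', mul_one] using
      hasDerivAt_userRate_mul_mul hd (div_pos ha hr).ne'
  have hdb : HasDerivAt (userRate ε σ b) d (1 - a / r) := by
    rw [show 1 - a / r = b / r by field_simp; ring]
    simpa only [div_mul_cancel₀ _ hr.ne', mul_one] using
      hasDerivAt_userRate_mul_mul hd (div_pos hb hr).ne'
  exact (hda.add (hdb.comp (a / r) ((hasDerivAt_id' _).const_sub 1))).congr_deriv (by ring)
end

section
/- Let a, b, c, η be real numbers with 0 < b < a, c > 0 and 0 < η < 1. Then log₂(1 + a/(b+c)) + log₂(1 + b/(η·a+c)) < log₂(1 + a/(η·b+c)) + log₂(1 + b/(a+c)); equivalently, (η·a·b + c·(a + η·b + c))·(b + η·a + c) < (η·a·b + c·(b + η·a + c))·(a + η·b + c). -/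
/-- Appendix E key inequality: when `0 < b < a`, the imperfect-SIC sum-rate of the
`t→r` decoding order is strictly smaller than that of the `r→t` order, together with
its equivalent polynomial form. -/
theorem imperfect_sic_order_inequality
    (a b c η : ℝ) (hb : 0 < b) (hba : b < a) (hc : 0 < c) (hη0 : 0 < η) (hη1 : η < 1) :
    (Real.logb 2 (1 + a / (b + c)) + Real.logb 2 (1 + b / (η * a + c))
      < Real.logb 2 (1 + a / (η * b + c)) + Real.logb 2 (1 + b / (a + c)))
    ∧
    (η * a * b + c * (a + η * b + c)) * (b + η * a + c)
      < (η * a * b + c * (b + η * a + c)) * (a + η * b + c) := by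
  have ha : 0 < a := hb.trans hba
  have h1 : 0 < b + c := by linarith
  have h2 : 0 < η * a + c := by positivity
  have h3 : 0 < η * b + c := by positivity
  have h4 : 0 < a + c := by linarith
  have p1 : 0 < 1 + a / (b + c) := by positivity
  have p2 : 0 < 1 + b / (η * a + c) := by positivity
  have p3 : 0 < 1 + a / (η * b + c) := by positivity
  have p4 : 0 < 1 + b / (a + c) := by positivity
  have hfac : 0 < η * a * b * ((1 - η) * (a - b)) := by
    have : 0 < (1 - η) * (a - b) := mul_pos (by linarith) (by linarith)
    positivity
  have key : (1 + a / (b + c)) * (1 + b / (η * a + c))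
      < (1 + a / (η * b + c)) * (1 + b / (a + c)) := by
    have e1 : (1:ℝ) + a / (b + c) = (a + b + c) / (b + c) := by field_simp; ring
    have e2 : (1:ℝ) + b / (η * a + c) = (η * a + b + c) / (η * a + c) := by field_simp; ring
    have e3 : (1:ℝ) + a / (η * b + c) = (a + η * b + c) / (η * b + c) := by field_simp; ring
    have e4 : (1:ℝ) + b / (a + c) = (a + b + c) / (a + c) := by field_simp; ring
    rw [e1, e2, e3, e4, div_mul_div_comm, div_mul_div_comm,
      div_lt_div_iff₀ (by positivity) (by positivity)]
    nlinarith [mul_pos (show (0:ℝ) < a + b + c by linarith) hfac]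
  constructor
  · rw [← Real.logb_mul p1.ne' p2.ne', ← Real.logb_mul p3.ne' p4.ne']
    exact Real.logb_lt_logb one_lt_two (by positivity) key
  · nlinarith [hfac]
end

section
/- Let a, b, c, η be real numbers with c > 0 and 0 < η < 1, and define R(β) = β·(log₂(1 + a/(b+c)) + log₂(1 + b/(η·a+c))) + (1−β)·(log₂(1 + a/(η·b+c)) + log₂(1 + b/(a+c))) for β ∈ [0,1]. If 0 < b < a then R is strictly decreasing on [0,1], so R is uniquely maximized at β = 0; if 0 < a < b then R is strictly increasing on [0,1], so R is uniquely maximized at β = 1. (Theorem 5: with imperfect SIC, the user having lower effective channel gain should be decoded first.) -/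
/-- Key inequality: when `0 < b < a`, the `t→r` order gives a strictly smaller sum. -/
lemma key_lt (a b c η : ℝ) (hc : 0 < c) (hη0 : 0 < η) (hη1 : η < 1)
    (hb : 0 < b) (hba : b < a) :
    Real.logb 2 (1 + a / (b + c)) + Real.logb 2 (1 + b / (η * a + c)) <
    Real.logb 2 (1 + a / (η * b + c)) + Real.logb 2 (1 + b / (a + c)) := by
  have ha : 0 < a := hb.trans hba
  have h1 : 0 < b + c := by linarith
  have h2 : 0 < η * a + c := by positivity
  have h3 : 0 < η * b + c := by positivity
  have h4 : 0 < a + c := by linarith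
  have e1 : 1 + a / (b + c) = (a + b + c) / (b + c) := by field_simp; ring
  have e2 : 1 + b / (η * a + c) = (η * a + b + c) / (η * a + c) := by field_simp; ring
  have e3 : 1 + a / (η * b + c) = (a + η * b + c) / (η * b + c) := by field_simp; ring
  have e4 : 1 + b / (a + c) = (a + b + c) / (a + c) := by field_simp; ring
  rw [e1, e2, e3, e4]
  have p1 : (0:ℝ) < (a + b + c) / (b + c) := by positivity
  have p2 : (0:ℝ) < (η * a + b + c) / (η * a + c) := by positivity
  have p3 : (0:ℝ) < (a + η * b + c) / (η * b + c) := by positivity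
  have p4 : (0:ℝ) < (a + b + c) / (a + c) := by positivity
  rw [← Real.logb_mul (ne_of_gt p1) (ne_of_gt p2),
      ← Real.logb_mul (ne_of_gt p3) (ne_of_gt p4)]
  apply Real.logb_lt_logb one_lt_two (by positivity)
  rw [div_mul_div_comm, div_mul_div_comm, div_lt_div_iff₀ (by positivity) (by positivity)]
  have hD : (η * a + b + c) * (η * b + c) * (a + c) <
      (a + η * b + c) * (b + c) * (η * a + c) := by
    nlinarith [mul_pos (mul_pos ha hb) hη0, mul_pos (sub_pos.2 hba) (sub_pos.2 hη1)]
  nlinarith [mul_pos (mul_pos ha hb) hc, hD, mul_pos h1 h2, mul_pos h3 h4,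
    mul_lt_mul_of_pos_left hD (show (0:ℝ) < a + b + c by linarith)]

/-- Theorem 5: with imperfect SIC, the sum-rate `R(β)` is strictly decreasing in the
decoding-order fraction `β` when `0 < b < a` (so it is uniquely maximized at `β = 0`),
and strictly increasing when `0 < a < b` (so it is uniquely maximized at `β = 1`). -/
theorem imperfect_sic_optimal_decoding_order
    (a b c η : ℝ) (hc : 0 < c) (hη0 : 0 < η) (hη1 : η < 1) :
    (0 < b → b < a →
      StrictAntiOn
        (fun β : ℝ =>
          β * (Real.logb 2 (1 + a / (b + c)) + Real.logb 2 (1 + b / (η * a + c)))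
            + (1 - β) * (Real.logb 2 (1 + a / (η * b + c)) + Real.logb 2 (1 + b / (a + c))))
        (Set.Icc 0 1)
      ∧
      ∀ β ∈ Set.Icc (0 : ℝ) 1, β ≠ 0 →
        β * (Real.logb 2 (1 + a / (b + c)) + Real.logb 2 (1 + b / (η * a + c)))
            + (1 - β) * (Real.logb 2 (1 + a / (η * b + c)) + Real.logb 2 (1 + b / (a + c)))
          < Real.logb 2 (1 + a / (η * b + c)) + Real.logb 2 (1 + b / (a + c)))
    ∧
    (0 < a → a < b →
      StrictMonoOn
        (fun β : ℝ =>
          β * (Real.logb 2 (1 + a / (b + c)) + Real.logb 2 (1 + b / (η * a + c)))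
            + (1 - β) * (Real.logb 2 (1 + a / (η * b + c)) + Real.logb 2 (1 + b / (a + c))))
        (Set.Icc 0 1)
      ∧
      ∀ β ∈ Set.Icc (0 : ℝ) 1, β ≠ 1 →
        β * (Real.logb 2 (1 + a / (b + c)) + Real.logb 2 (1 + b / (η * a + c)))
            + (1 - β) * (Real.logb 2 (1 + a / (η * b + c)) + Real.logb 2 (1 + b / (a + c)))
          < Real.logb 2 (1 + a / (b + c)) + Real.logb 2 (1 + b / (η * a + c))) := by
  constructor
  · intro hb hba
    have hK := key_lt a b c η hc hη0 hη1 hb hba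
    set K1 := Real.logb 2 (1 + a / (b + c)) + Real.logb 2 (1 + b / (η * a + c)) with hK1
    set K0 := Real.logb 2 (1 + a / (η * b + c)) + Real.logb 2 (1 + b / (a + c)) with hK0
    constructor
    · intro x _ y _ hxy
      simp only
      nlinarith [mul_lt_mul_of_pos_left hK (sub_pos.2 hxy)]
    · intro β hβ hβ0
      have h0 : 0 < β := lt_of_le_of_ne hβ.1 (Ne.symm hβ0)
      nlinarith [mul_lt_mul_of_pos_left hK h0]
  · intro ha hab
    have hK := key_lt b a c η hc hη0 hη1 ha hab
    have hba : b + c = c + b := by ring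
    -- hK is stated with a,b swapped; rewrite commutative additions to match
    have hK' : Real.logb 2 (1 + a / (η * b + c)) + Real.logb 2 (1 + b / (a + c)) <
        Real.logb 2 (1 + a / (b + c)) + Real.logb 2 (1 + b / (η * a + c)) := by
      linarith [hK]
    set K1 := Real.logb 2 (1 + a / (b + c)) + Real.logb 2 (1 + b / (η * a + c)) with hK1
    set K0 := Real.logb 2 (1 + a / (η * b + c)) + Real.logb 2 (1 + b / (a + c)) with hK0
    constructor
    · intro x _ y _ hxy
      simp only
      nlinarith [mul_lt_mul_of_pos_left hK' (sub_pos.2 hxy)]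
    · intro β hβ hβ1
      have h1 : β < 1 := lt_of_le_of_ne hβ.2 hβ1
      nlinarith [mul_lt_mul_of_pos_left hK' (sub_pos.2 h1)]
end

section
/- Let K ≥ 1, ε_t, ε_r ∈ (0,1], c_t, c_r > 0, σ > 0 and ζ' ≥ 0 be real constants, and define the normalized mean square error at pilot power P > 0 by Ξ(P) = (1/2)·((P·ζ' + σ)/(K·P·ε_t·c_t + P·ζ' + σ) + (P·ζ' + σ)/(K·P·ε_r·c_r + P·ζ' + σ)). Then, as P → ∞, Ξ(P) tends to (1/2)·(ζ'/(K·ε_t·c_t + ζ') + ζ'/(K·ε_r·c_r + ζ')). In particular, for ideal transceiver hardware (ζ' = 0) the N-MSE tends to 0, while for non-ideal hardware (ζ' > 0) the N-MSE tends to a strictly positive performance floor. -/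
/-! Each user's N-MSE is a ratio of two affine functions of the pilot power `P` with the same
constant term `σ`, so as `P → ∞` it tends to the ratio `ζ' / (K ε c + ζ')` of their slopes. -/

open Filter Topology

theorem tendsto_affine_div_affine_atTop {a b c d : ℝ} (hc : c ≠ 0) :
    Tendsto (fun x : ℝ => (a * x + b) / (c * x + d)) atTop (𝓝 (a / c)) := by
  have hinv : Tendsto (fun x : ℝ => x⁻¹) atTop (𝓝 0) := tendsto_inv_atTop_zero
  have hlim : Tendsto (fun x : ℝ => (a + b * x⁻¹) / (c + d * x⁻¹)) atTop
      (𝓝 ((a + b * 0) / (c + d * 0))) :=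
    ((hinv.const_mul b).const_add a).div ((hinv.const_mul d).const_add c) (by simpa using hc)
  rw [mul_zero, mul_zero, add_zero, add_zero] at hlim
  refine hlim.congr' ?_
  filter_upwards [eventually_gt_atTop (0 : ℝ)] with x hx
  rw [← mul_div_mul_right _ _ hx.ne']
  field_simp

theorem nmse_high_power_floor_general
    (K εt εr ct cr σ ζ' : ℝ) (hK : 1 ≤ K)
    (hεt : 0 < εt) (hεr : 0 < εr)
    (hct : 0 < ct) (hcr : 0 < cr) (hζ' : 0 ≤ ζ') :
    Filter.Tendsto
      (fun P : ℝ =>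
        (1 / 2) * ((P * ζ' + σ) / (K * P * εt * ct + P * ζ' + σ)
          + (P * ζ' + σ) / (K * P * εr * cr + P * ζ' + σ)))
      Filter.atTop
      (nhds ((1 / 2) * (ζ' / (K * εt * ct + ζ') + ζ' / (K * εr * cr + ζ'))))
    ∧ (ζ' = 0 → (1 / 2) * (ζ' / (K * εt * ct + ζ') + ζ' / (K * εr * cr + ζ')) = 0)
    ∧ (0 < ζ' → 0 < (1 / 2) * (ζ' / (K * εt * ct + ζ') + ζ' / (K * εr * cr + ζ'))) := by
  have hK0 : 0 < K := by linarith
  have user_nmse : ∀ ε c : ℝ, 0 < ε → 0 < c →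
      Tendsto (fun P : ℝ => (P * ζ' + σ) / (K * P * ε * c + P * ζ' + σ)) atTop
        (𝓝 (ζ' / (K * ε * c + ζ'))) := by
    intro ε c hε hc
    have hslope : K * ε * c + ζ' ≠ 0 := by positivity
    convert tendsto_affine_div_affine_atTop (a := ζ') (b := σ) (d := σ) hslope using 2
    ring
  refine ⟨((user_nmse εt ct hεt hct).add (user_nmse εr cr hεr hcr)).const_mul _, ?_, ?_⟩
  · rintro rfl
    simp
  · intro hζ'pos
    have ht : 0 < K * εt * ct + ζ' := by positivity
    have hr : 0 < K * εr * cr + ζ' := by positivity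
    positivity

/-- Equations (25)–(28): as the pilot power `P → ∞`, the normalized mean square error
`Ξ(P)` tends to the floor `(1/2)·(ζ'/(K ε_t c_t + ζ') + ζ'/(K ε_r c_r + ζ'))`;
the floor is `0` for ideal hardware (`ζ' = 0`) and strictly positive for
non-ideal hardware (`ζ' > 0`). -/
theorem nmse_high_power_floor
    (K εt εr ct cr σ ζ' : ℝ) (hK : 1 ≤ K)
    (hεt : 0 < εt) (hεt1 : εt ≤ 1) (hεr : 0 < εr) (hεr1 : εr ≤ 1)
    (hct : 0 < ct) (hcr : 0 < cr) (hσ : 0 < σ) (hζ' : 0 ≤ ζ') :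
    Filter.Tendsto
      (fun P : ℝ =>
        (1 / 2) * ((P * ζ' + σ) / (K * P * εt * ct + P * ζ' + σ)
          + (P * ζ' + σ) / (K * P * εr * cr + P * ζ' + σ)))
      Filter.atTop
      (nhds ((1 / 2) * (ζ' / (K * εt * ct + ζ') + ζ' / (K * εr * cr + ζ'))))
    ∧ (ζ' = 0 → (1 / 2) * (ζ' / (K * εt * ct + ζ') + ζ' / (K * εr * cr + ζ')) = 0)
    ∧ (0 < ζ' → 0 < (1 / 2) * (ζ' / (K * εt * ct + ζ') + ζ' / (K * εr * cr + ζ'))) :=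
  nmse_high_power_floor_general K εt εr ct cr σ ζ' hK hεt hεr hct hcr hζ'
end
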